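/- arXiv:2309.08470 — 2 statements merged into one kernel-verified Lean document; each statement's English description precedes it below -/
import Mathlib

section
/- A quadrilateral (v0∘, v0•, v1∘, v•) whose alternating sum of side lengths vanishes, i.e. |v − v0∘| − |v − v1∘| = |v0• − v0∘| − |v0• − v1∘| where v = v•, admits a circle tangent to the four lines containing its sides (Pitot theorem converse for convex quadrilaterals). -/
/-!
The centre is the intersection `z` of the interior bisectors of the angles at `B` and `C`.
Writing `u₁, u₂, u₃` for the unit vectors along `AB`, `BC`, `CD`, the bisector conditions
`⟪z - B, u₁ + u₂⟫ = 0` and `⟪z - C, u₂ + u₃⟫ = 0` make `z` equidistant from the lines `AB`, `BC`,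
`CD`, and make the signed tangent lengths from `A` along `AB` and from `D` along `DC` add up to
`|AB| - |BC| + |CD|`, which is `|DA|` by the Pitot relation. When the tangent lengths from two
points to a circle add up to their distance, the line through them touches the circle, so `DA`
is tangent too. Convexity is used, in the plane, only to see that `A` and `D` lie strictly on the
same side of `BC`, which makes the two bisectors meet off the line `BC`. The hypotheses allow
coinciding vertices only when three of them coincide; then a circle through that vertex tangent to
the remaining line works.
-/

open EuclideanGeometry RealInnerProductSpace Module

variable {V : Type*} [NormedAddCommGroup V] [InnerProductSpace ℝ V]

-- For `P = Q` the junk value `x / 0 = 0` makes the right side `‖z - P‖ ^ 2`, which is correct.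
theorem infDist_affineSpan_pair_sq (z P Q : V) :
    Metric.infDist z (line[ℝ, P, Q] : Set V) ^ 2 =
      ‖z - P‖ ^ 2 - ⟪Q - P, z - P⟫ ^ 2 / ‖Q - P‖ ^ 2 := by
  have hP : P ∈ line[ℝ, P, Q] := left_mem_affineSpan_pair ℝ P Q
  have : Nonempty line[ℝ, P, Q] := ⟨⟨P, hP⟩⟩
  rw [← dist_orthogonalProjection_eq_infDist, orthogonalProjection_apply_mem _ hP,
    Submodule.coe_orthogonalProjectionOnto_apply]
  simp only [direction_affineSpan, vectorSpan_pair]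
  rw [Submodule.starProjection_singleton, dist_eq_norm, vadd_eq_add, vsub_eq_sub, vsub_eq_sub]
  rcases eq_or_ne Q P with rfl | h
  · simp
  have hQP : ‖Q - P‖ ≠ 0 := norm_ne_zero_iff.2 (sub_ne_zero.2 h)
  have : z - ((⟪P - Q, z - P⟫ / ((‖P - Q‖ ^ 2 : ℝ) : ℝ)) • (P - Q) + P) =
      (z - P) - (⟪Q - P, z - P⟫ / ‖Q - P‖ ^ 2) • (Q - P) := by
    rw [← neg_sub Q P, inner_neg_left, norm_neg, neg_div, neg_smul, smul_neg, neg_neg]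
    abel
  rw [RCLike.ofReal_real_eq_id, id, this, norm_sub_sq_real, inner_smul_right, norm_smul,
    mul_pow, Real.norm_eq_abs, sq_abs, real_inner_comm]
  field_simp
  ring

theorem infDist_affineSpan_pair_sq_of_sub_eq_smul {P Q u : V} (hu : ‖u‖ = 1) {t : ℝ}
    (ht : t ≠ 0) (h : Q - P = t • u) (z : V) :
    Metric.infDist z (line[ℝ, P, Q] : Set V) ^ 2 = ‖z - P‖ ^ 2 - ⟪z - P, u⟫ ^ 2 := by
  rw [infDist_affineSpan_pair_sq, h, inner_smul_left, norm_smul, hu, real_inner_comm]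
  simp only [Real.norm_eq_abs, mul_one, conj_trivial]
  rw [mul_pow, sq_abs]
  field_simp

-- `s` and `t` are signed lengths of the tangents from `P` and `Q` to the circle `(z, r)`.
theorem infDist_affineSpan_pair_eq_of_tangent_lengths {z P Q : V} {r s t : ℝ} (hPQ : P ≠ Q)
    (hr : 0 ≤ r) (hP : ‖z - P‖ ^ 2 = r ^ 2 + s ^ 2) (hQ : ‖z - Q‖ ^ 2 = r ^ 2 + t ^ 2)
    (hst : ‖Q - P‖ = s + t) :
    Metric.infDist z (line[ℝ, P, Q] : Set V) = r := by
  have hd : ‖Q - P‖ ≠ 0 := norm_ne_zero_iff.2 (sub_ne_zero.2 hPQ.symm)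
  have hinner : ⟪Q - P, z - P⟫ = ‖Q - P‖ * s := by
    have : z - Q = (z - P) - (Q - P) := by abel
    rw [this, norm_sub_sq_real, hP, hst] at hQ
    rw [hst, real_inner_comm]
    linarith
  refine (pow_left_inj₀ Metric.infDist_nonneg hr two_ne_zero).1 ?_
  rw [infDist_affineSpan_pair_sq, hinner, hP]
  field_simp
  ring

theorem infDist_eq_infDist_of_inner_add_eq_zero_of_pitot {A B C D z u₁ u₂ u₃ : V} {a b c : ℝ}
    (hu₁ : ‖u₁‖ = 1) (hu₂ : ‖u₂‖ = 1) (hu₃ : ‖u₃‖ = 1) (ha : a ≠ 0) (hb : b ≠ 0) (hc : c ≠ 0)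
    (hAB : B - A = a • u₁) (hBC : C - B = b • u₂) (hCD : D - C = c • u₃) (hDA : D ≠ A)
    (hpitot : ‖D - A‖ = a - b + c) (hzB : ⟪z - B, u₁ + u₂⟫ = 0) (hzC : ⟪z - C, u₂ + u₃⟫ = 0) :
    Metric.infDist z (line[ℝ, A, B] : Set V) = Metric.infDist z (line[ℝ, B, C] : Set V) ∧
      Metric.infDist z (line[ℝ, C, D] : Set V) = Metric.infDist z (line[ℝ, B, C] : Set V) ∧
      Metric.infDist z (line[ℝ, D, A] : Set V) = Metric.infDist z (line[ℝ, B, C] : Set V) := by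
  rw [inner_add_right] at hzB hzC
  have sq_left {P Q u : V} {t : ℝ} (hu : ‖u‖ = 1) (ht : t ≠ 0) (h : Q - P = t • u) :=
    infDist_affineSpan_pair_sq_of_sub_eq_smul hu ht h z
  have sq_right {P Q u : V} {t : ℝ} (hu : ‖u‖ = 1) (ht : t ≠ 0) (h : Q - P = t • u) :
      Metric.infDist z (line[ℝ, P, Q] : Set V) ^ 2 = ‖z - Q‖ ^ 2 - ⟪z - Q, u⟫ ^ 2 := by
    rw [Set.pair_comm]
    exact sq_left hu (neg_ne_zero.2 ht) (by rw [← neg_sub, h, neg_smul])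
  have hAB₁ := sq_left hu₁ ha hAB
  have hAB₂ := sq_right hu₁ ha hAB
  have hBC₁ := sq_left hu₂ hb hBC
  have hBC₂ := sq_right hu₂ hb hBC
  have hCD₁ := sq_left hu₃ hc hCD
  have hCD₂ := sq_right hu₃ hc hCD
  set ρ := Metric.infDist z (line[ℝ, B, C] : Set V)
  have of_sq {P Q : V} (h : Metric.infDist z (line[ℝ, P, Q] : Set V) ^ 2 = ρ ^ 2) :
      Metric.infDist z (line[ℝ, P, Q] : Set V) = ρ :=
    (pow_left_inj₀ Metric.infDist_nonneg Metric.infDist_nonneg two_ne_zero).1 h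
  have hρAB : Metric.infDist z (line[ℝ, A, B] : Set V) ^ 2 = ρ ^ 2 := by
    rw [hAB₂, hBC₁, show ⟪z - B, u₁⟫ = -⟪z - B, u₂⟫ by linarith, neg_sq]
  have hρCD : Metric.infDist z (line[ℝ, C, D] : Set V) ^ 2 = ρ ^ 2 := by
    rw [hCD₁, hBC₂, show ⟪z - C, u₃⟫ = -⟪z - C, u₂⟫ by linarith, neg_sq]
  refine ⟨of_sq hρAB, of_sq hρCD, ?_⟩
  -- the tangent lengths from `D` along `DC` and from `A` along `AB`; the bisector conditions
  -- make them add up to `a - b + c`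
  refine infDist_affineSpan_pair_eq_of_tangent_lengths hDA Metric.infDist_nonneg
    (s := -⟪z - D, u₃⟫) (t := ⟪z - A, u₁⟫) (by rw [neg_sq]; linarith) (by linarith) ?_
  have hzC₂ : ⟪z - C, u₂⟫ = ⟪z - B, u₂⟫ - b := by
    rw [show z - C = (z - B) - (C - B) by abel, hBC, inner_sub_left, inner_smul_left,
      real_inner_self_eq_norm_sq, hu₂, conj_trivial, one_pow, mul_one]
  rw [norm_sub_rev, hpitot, show z - D = (z - C) - (D - C) by abel,
    show z - A = (z - B) + (B - A) by abel, hCD, hAB, inner_sub_left, inner_add_left,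
    inner_smul_left, inner_smul_left, real_inner_self_eq_norm_sq, real_inner_self_eq_norm_sq, hu₁,
    hu₃, conj_trivial, conj_trivial]
  linarith

section ConvexPosition

variable {S : Set V} (hS : ∀ x ∈ S, x ∉ convexHull ℝ (S \ {x}))
include hS

theorem eq_or_eq_of_mem_segment_of_notMem_convexHull_sdiff {x y w : V} (hx : x ∈ S) (hy : y ∈ S)
    (hw : w ∈ S) (h : y ∈ segment ℝ x w) : y = x ∨ y = w := by
  by_contra! hne
  rw [← convexHull_pair] at h
  exact hS y hy (convexHull_mono (Set.pair_subset (show x ∈ S \ {y} from ⟨hx, hne.1.symm⟩)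
    (show w ∈ S \ {y} from ⟨hw, hne.2.symm⟩)) h)

theorem not_collinear_of_notMem_convexHull_sdiff {x y w : V} (hx : x ∈ S) (hy : y ∈ S)
    (hw : w ∈ S) (hxy : x ≠ y) (hyw : y ≠ w) (hxw : x ≠ w) : ¬ Collinear ℝ ({x, y, w} : Set V) := by
  intro hcol
  rcases hcol.wbtw_or_wbtw_or_wbtw with h | h | h
  · exact (eq_or_eq_of_mem_segment_of_notMem_convexHull_sdiff hS hx hy hw
      (mem_segment_iff_wbtw.2 h)).elim hxy.symm hyw
  · exact (eq_or_eq_of_mem_segment_of_notMem_convexHull_sdiff hS hy hw hx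
      (mem_segment_iff_wbtw.2 h)).elim hyw.symm hxw.symm
  · exact (eq_or_eq_of_mem_segment_of_notMem_convexHull_sdiff hS hw hx hy
      (mem_segment_iff_wbtw.2 h)).elim hxw hxy

end ConvexPosition

theorem eq_and_eq_or_pairwise_ne_of_pitot {A B C D p : V}
    (hconv : ∀ x ∈ ({A, B, C, D} : Set V), x ∉ convexHull ℝ (({A, B, C, D} : Set V) \ {x}))
    (hpAC : p ∈ segment ℝ A C) (hpBD : p ∈ segment ℝ B D)
    (hpitot : dist D A - dist D C = dist B A - dist B C) :
    (A = B ∧ B = C) ∨ (A = B ∧ B = D) ∨ (A = C ∧ C = D) ∨ (B = C ∧ C = D) ∨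
      (A ≠ B ∧ B ≠ C ∧ C ≠ D ∧ D ≠ A ∧ A ≠ C ∧ B ≠ D) := by
  have hA : A ∈ ({A, B, C, D} : Set V) := by simp
  have hB : B ∈ ({A, B, C, D} : Set V) := by simp
  have hC : C ∈ ({A, B, C, D} : Set V) := by simp
  have hD : D ∈ ({A, B, C, D} : Set V) := by simp
  have between : ∀ {x y w : V}, x ∈ ({A, B, C, D} : Set V) → y ∈ ({A, B, C, D} : Set V) →
      w ∈ ({A, B, C, D} : Set V) → dist x y + dist y w = dist x w → y = x ∨ y = w :=
    fun hx hy hw h ↦ eq_or_eq_of_mem_segment_of_notMem_convexHull_sdiff hconv hx hy hw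
      (mem_segment_iff_wbtw.2 (dist_add_dist_eq_iff.1 h))
  by_cases hAC : A = C
  · subst hAC
    rw [segment_same, Set.mem_singleton_iff] at hpAC
    subst hpAC
    rcases eq_or_eq_of_mem_segment_of_notMem_convexHull_sdiff hconv hB hA hD hpBD with h | h
    exacts [Or.inl ⟨h, h.symm⟩, Or.inr (Or.inr (Or.inl ⟨rfl, h⟩))]
  by_cases hBD : B = D
  · subst hBD
    rw [segment_same, Set.mem_singleton_iff] at hpBD
    subst hpBD
    rcases eq_or_eq_of_mem_segment_of_notMem_convexHull_sdiff hconv hA hB hC hpAC with h | h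
    exacts [Or.inr (Or.inl ⟨h.symm, rfl⟩), Or.inr (Or.inr (Or.inr (Or.inl ⟨h, h.symm⟩)))]
  -- equal adjacent vertices turn the Pitot relation into equality in a triangle inequality
  refine Or.inr (Or.inr (Or.inr (Or.inr ⟨?_, ?_, ?_, ?_, hAC, hBD⟩)))
  · rintro rfl
    rcases between hD hA hC (by linarith [dist_self A]) with h | h
    exacts [hBD h, hAC h]
  · rintro rfl
    rcases between hD hB hA (by linarith [dist_self B]) with h | h
    exacts [hBD h, hAC h.symm]
  · rintro rfl
    rcases between hB hC hA (by linarith [dist_self C]) with h | h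
    exacts [hBD h.symm, hAC h.symm]
  · rintro rfl
    rcases between hB hD hC (by linarith [dist_self D]) with h | h
    exacts [hBD h.symm, hAC h]

section Oriented

variable [Fact (finrank ℝ V = 2)] (o : Orientation ℝ V (Fin 2))

local notation "ω" => o.areaForm

theorem collinear_of_areaForm_sub_eq_zero {x y w : V} (h : ω (y - x) (w - x) = 0) :
    Collinear ℝ ({x, y, w} : Set V) := by
  have hparallel : ‖y - x‖ ^ 2 • (w - x) = ⟪y - x, w - x⟫ • (y - x) := by
    refine ext_inner_right ℝ fun e ↦ ?_
    simp only [inner_smul_left, conj_trivial]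
    rw [← o.inner_mul_inner_add_areaForm_mul_areaForm, h]
    ring
  rcases eq_or_ne y x with rfl | hxy
  · simpa using collinear_pair ℝ y w
  have hw : w = AffineMap.lineMap x y (⟪y - x, w - x⟫ / ‖y - x‖ ^ 2) := by
    rw [AffineMap.lineMap_apply, vsub_eq_sub, vadd_eq_add, div_eq_inv_mul, mul_smul, ← hparallel,
      inv_smul_smul₀ (by simpa [sub_eq_zero] using hxy), sub_add_cancel]
  rw [Set.pair_comm y w, Set.insert_comm, hw]
  exact collinear_insert_of_mem_affineSpan_pair (AffineMap.lineMap_mem_affineSpan_pair _ _ _)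

theorem areaForm_mul_areaForm_pos_of_mem_segment {A B C D p : V}
    (hA : ω (C - B) (A - B) ≠ 0) (hD : ω (C - B) (D - B) ≠ 0)
    (hpAC : p ∈ segment ℝ A C) (hpBD : p ∈ segment ℝ B D) :
    0 < ω (C - B) (A - B) * ω (C - B) (D - B) := by
  obtain ⟨α, β, hα, -, hαβ, rfl⟩ := hpAC
  obtain ⟨γ, δ, -, hδ, hγδ, hp⟩ := hpBD
  have hpB₁ : α • A + β • C - B = α • (A - B) + β • (C - B) := by
    linear_combination (norm := module) hαβ • B
  have hpB₂ : α • A + β • C - B = δ • (D - B) := by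
    linear_combination (norm := module) -hp + hγδ • B
  have hcomb : α * ω (C - B) (A - B) = δ * ω (C - B) (D - B) := by
    have := congrArg (ω (C - B)) (hpB₁.symm.trans hpB₂)
    rwa [map_add, map_smul, map_smul, map_smul, o.areaForm_apply_self, smul_zero, add_zero] at this
  by_contra hneg
  have hαA : α * ω (C - B) (A - B) = 0 := by
    nlinarith [mul_nonneg hα hδ, mul_nonpos_of_nonneg_of_nonpos (mul_nonneg hα hδ) (not_lt.1 hneg)]
  have hα0 : α = 0 := (mul_eq_zero.1 hαA).resolve_right hA
  have hδ0 : δ = 0 := (mul_eq_zero.1 (hcomb ▸ hαA)).resolve_right hD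
  apply hA
  have hBC : C - B = 0 := by
    rw [hα0, zero_add] at hαβ
    rw [hδ0, hα0, hαβ] at hpB₂
    simpa using hpB₂
  simp [hBC]

theorem exists_ne_zero_inner_eq_zero (v : V) : ∃ w : V, w ≠ 0 ∧ ⟪v, w⟫ = 0 := by
  rcases eq_or_ne v 0 with rfl | hv
  · have := Module.nontrivial_of_finrank_eq_succ (Fact.out : finrank ℝ V = 2)
    obtain ⟨w, hw⟩ := exists_ne (0 : V)
    exact ⟨w, hw, inner_zero_left w⟩
  have hK : finrank ℝ (ℝ ∙ v)ᗮ = 1 := Submodule.finrank_orthogonal_span_singleton hv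
  obtain ⟨w, hwK, hw⟩ := Submodule.exists_mem_ne_zero_of_ne_bot (p := (ℝ ∙ v)ᗮ)
    (fun hbot ↦ by rw [hbot, finrank_bot] at hK; exact zero_ne_one hK)
  exact ⟨w, hw, Submodule.mem_orthogonal_singleton_iff_inner_right.1 hwK⟩

theorem exists_infDist_affineSpan_pair_eq (P Q : V) :
    ∃ (z : V) (r : ℝ), 0 < r ∧
      Metric.infDist z (line[ℝ, P, P] : Set V) = r ∧
      Metric.infDist z (line[ℝ, P, Q] : Set V) = r ∧
      Metric.infDist z (line[ℝ, Q, P] : Set V) = r := by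
  obtain ⟨w, hw, hwQ⟩ := exists_ne_zero_inner_eq_zero (Q - P)
  have hdist : ∀ {Q'}, ⟪Q' - P, w⟫ = 0 → Metric.infDist (P + w) (line[ℝ, P, Q'] : Set V) = ‖w‖ :=
    fun h ↦ (pow_left_inj₀ Metric.infDist_nonneg (norm_nonneg _) two_ne_zero).1 (by
      rw [infDist_affineSpan_pair_sq, add_sub_cancel_left, h]; simp)
  refine ⟨P + w, ‖w‖, norm_pos_iff.2 hw, hdist (by simp), hdist hwQ, ?_⟩
  rw [Set.pair_comm]
  exact hdist hwQ

theorem exists_inner_add_eq_zero_and_infDist_pos {B C u₁ u₂ u₃ : V} {b : ℝ} (hu₁ : ‖u₁‖ = 1)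
    (hu₂ : ‖u₂‖ = 1) (hu₃ : ‖u₃‖ = 1) (hb : 0 < b) (hBC : C - B = b • u₂)
    (hside : 0 < ω u₁ u₂ * ω u₂ u₃) :
    ∃ z, ⟪z - B, u₁ + u₂⟫ = 0 ∧ ⟪z - C, u₂ + u₃⟫ = 0 ∧
      0 < Metric.infDist z (line[ℝ, B, C] : Set V) := by
  have hx : ⟪u₁, u₂⟫ ^ 2 + ω u₁ u₂ ^ 2 = 1 := by
    simpa [hu₁, hu₂] using o.inner_sq_add_areaForm_sq u₁ u₂
  have hy : ⟪u₂, u₃⟫ ^ 2 + ω u₂ u₃ ^ 2 = 1 := by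
    simpa [hu₂, hu₃] using o.inner_sq_add_areaForm_sq u₂ u₃
  have h₁₃ : ⟪u₁, u₃⟫ = ⟪u₁, u₂⟫ * ⟪u₂, u₃⟫ - ω u₁ u₂ * ω u₂ u₃ := by
    have := o.inner_mul_inner_add_areaForm_mul_areaForm u₂ u₁ u₃
    rw [hu₂, o.areaForm_swap u₂ u₁, real_inner_comm u₁ u₂] at this
    linarith
  have hy₁ : 0 < 1 + ⟪u₂, u₃⟫ := by nlinarith [mul_self_pos.2 hside.ne']
  -- this is `⟪u₁ - u₂, u₁ - u₃⟫`; its positivity makes the bisectors at `B` and `C` meet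
  have hden : 0 < (1 - ⟪u₁, u₂⟫) * (1 + ⟪u₂, u₃⟫) + ω u₁ u₂ * ω u₂ u₃ := by nlinarith
  obtain ⟨l, hl, hl₀⟩ : ∃ l : ℝ,
      l * ((1 - ⟪u₁, u₂⟫) * (1 + ⟪u₂, u₃⟫) + ω u₁ u₂ * ω u₂ u₃) = b * (1 + ⟪u₂, u₃⟫) ∧ l ≠ 0 :=
    ⟨_, div_mul_cancel₀ _ hden.ne', (div_pos (mul_pos hb hy₁) hden).ne'⟩
  refine ⟨B + l • (u₂ - u₁), ?_, ?_, ?_⟩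
  · simp only [add_sub_cancel_left, inner_smul_left, inner_sub_left, inner_add_right,
      real_inner_self_eq_norm_sq, hu₁, hu₂, real_inner_comm u₁ u₂, conj_trivial]
    ring
  · rw [show B + l • (u₂ - u₁) - C = l • (u₂ - u₁) - (C - B) by abel, hBC]
    simp only [inner_smul_left, inner_sub_left, inner_add_right, real_inner_self_eq_norm_sq, hu₂,
      h₁₃, conj_trivial]
    linear_combination hl
  · have hsq : Metric.infDist (B + l • (u₂ - u₁)) (line[ℝ, B, C] : Set V) ^ 2 =
        (l * ω u₁ u₂) ^ 2 := by
      rw [infDist_affineSpan_pair_sq_of_sub_eq_smul hu₂ hb.ne' hBC, add_sub_cancel_left,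
        norm_smul, inner_smul_left, mul_pow, mul_pow, norm_sub_sq_real, inner_sub_left,
        real_inner_self_eq_norm_sq, hu₁, hu₂, real_inner_comm u₁ u₂, Real.norm_eq_abs, sq_abs,
        conj_trivial]
      linear_combination (-l ^ 2) * hx
    have := mul_ne_zero hl₀ (left_ne_zero_of_mul hside.ne')
    nlinarith [Metric.infDist_nonneg (x := B + l • (u₂ - u₁)) (s := (line[ℝ, B, C] : Set V)),
      pow_pos (abs_pos.2 this) 2, sq_abs (l * ω u₁ u₂)]

theorem exists_tangent_circle_of_pitot {A B C D : V} (hDA : D ≠ A)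
    (hside : 0 < ω (C - B) (A - B) * ω (C - B) (D - B))
    (hpitot : dist D A - dist D C = dist B A - dist B C) :
    ∃ (z : V) (r : ℝ), 0 < r ∧
      Metric.infDist z (line[ℝ, A, B] : Set V) = r ∧
      Metric.infDist z (line[ℝ, B, C] : Set V) = r ∧
      Metric.infDist z (line[ℝ, C, D] : Set V) = r ∧
      Metric.infDist z (line[ℝ, D, A] : Set V) = r := by
  have hside' : 0 < ω (B - A) (C - B) * ω (C - B) (D - C) := by
    rwa [o.areaForm_swap, ← neg_sub B A, map_neg, LinearMap.neg_apply, neg_neg,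
      show D - B = (D - C) + (C - B) by abel, map_add, o.areaForm_apply_self, add_zero] at hside
  have hAB : B - A ≠ 0 := by rintro h; simp [h] at hside'
  have hBC : C - B ≠ 0 := by rintro h; simp [h] at hside'
  have hCD : D - C ≠ 0 := by rintro h; simp [h] at hside'
  have ha := norm_pos_iff.2 hAB
  have hb := norm_pos_iff.2 hBC
  have hc := norm_pos_iff.2 hCD
  have hu₁ : ‖‖B - A‖⁻¹ • (B - A)‖ = 1 := norm_smul_inv_norm hAB
  have hu₂ : ‖‖C - B‖⁻¹ • (C - B)‖ = 1 := norm_smul_inv_norm hBC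
  have hu₃ : ‖‖D - C‖⁻¹ • (D - C)‖ = 1 := norm_smul_inv_norm hCD
  have hside'' : 0 < ω (‖B - A‖⁻¹ • (B - A)) (‖C - B‖⁻¹ • (C - B)) *
      ω (‖C - B‖⁻¹ • (C - B)) (‖D - C‖⁻¹ • (D - C)) := by
    simp only [map_smul, LinearMap.smul_apply, smul_eq_mul]
    have hpos : 0 < ‖B - A‖⁻¹ * ‖C - B‖⁻¹ * ‖C - B‖⁻¹ * ‖D - C‖⁻¹ := by positivity
    linarith [mul_pos hpos hside']
  have hpitot' : ‖D - A‖ = ‖B - A‖ - ‖C - B‖ + ‖D - C‖ := by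
    simp only [dist_eq_norm, norm_sub_rev B C] at hpitot
    linarith
  obtain ⟨z, hzB, hzC, hr⟩ := exists_inner_add_eq_zero_and_infDist_pos o hu₁ hu₂ hu₃ hb
    (smul_inv_smul₀ hb.ne' _).symm hside''
  obtain ⟨hzAB, hzCD, hzDA⟩ := infDist_eq_infDist_of_inner_add_eq_zero_of_pitot hu₁ hu₂ hu₃
    ha.ne' hb.ne' hc.ne' (smul_inv_smul₀ ha.ne' _).symm (smul_inv_smul₀ hb.ne' _).symm
    (smul_inv_smul₀ hc.ne' _).symm hDA hpitot' hzB hzC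
  exact ⟨z, _, hr, hzAB, rfl, hzCD, hzDA⟩

end Oriented

/-- converse of Pitot's theorem. If `A, B, C, D` (here
`A = v0∘`, `B = v0•`, `C = v1∘`, `D = v•`) are in convex position in cyclic order
(no vertex in the hull of the others and the diagonals meet), and the alternating sum of
side-lengths vanishes — written as `dist D A - dist D C = dist B A - dist B C` — then
there is a circle tangent to the four lines containing the sides. -/
theorem pitot_converse
    (A B C D : EuclideanSpace ℝ (Fin 2))
    (hconv : ∀ x ∈ ({A, B, C, D} : Set (EuclideanSpace ℝ (Fin 2))),
      x ∉ convexHull ℝ (({A, B, C, D} : Set (EuclideanSpace ℝ (Fin 2))) \ {x}))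
    (hdiag : (segment ℝ A C ∩ segment ℝ B D).Nonempty)
    (hpitot : dist D A - dist D C = dist B A - dist B C) :
    ∃ (z : EuclideanSpace ℝ (Fin 2)) (r : ℝ), 0 < r ∧
      Metric.infDist z ((affineSpan ℝ ({A, B} : Set (EuclideanSpace ℝ (Fin 2)))) :
        Set (EuclideanSpace ℝ (Fin 2))) = r ∧
      Metric.infDist z ((affineSpan ℝ ({B, C} : Set (EuclideanSpace ℝ (Fin 2)))) :
        Set (EuclideanSpace ℝ (Fin 2))) = r ∧
      Metric.infDist z ((affineSpan ℝ ({C, D} : Set (EuclideanSpace ℝ (Fin 2)))) :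
        Set (EuclideanSpace ℝ (Fin 2))) = r ∧
      Metric.infDist z ((affineSpan ℝ ({D, A} : Set (EuclideanSpace ℝ (Fin 2)))) :
        Set (EuclideanSpace ℝ (Fin 2))) = r := by
  have : Fact (finrank ℝ (EuclideanSpace ℝ (Fin 2)) = 2) := ⟨finrank_euclideanSpace_fin⟩
  let o : Orientation ℝ (EuclideanSpace ℝ (Fin 2)) (Fin 2) :=
    (EuclideanSpace.basisFun (Fin 2) ℝ).toBasis.orientation
  obtain ⟨p, hpAC, hpBD⟩ := hdiag
  rcases eq_and_eq_or_pairwise_ne_of_pitot hconv hpAC hpBD hpitot with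
    ⟨rfl, rfl⟩ | ⟨rfl, rfl⟩ | ⟨rfl, rfl⟩ | ⟨rfl, rfl⟩ | ⟨hAB, hBC, hCD, hDA, hAC, hBD⟩
  · obtain ⟨z, r, hr, hAA, hAD, hDA⟩ := exists_infDist_affineSpan_pair_eq A D
    exact ⟨z, r, hr, hAA, hAA, hAD, hDA⟩
  · obtain ⟨z, r, hr, hAA, hAC, hCA⟩ := exists_infDist_affineSpan_pair_eq A C
    exact ⟨z, r, hr, hAA, hAC, hCA, hAA⟩
  · obtain ⟨z, r, hr, hAA, hAB, hBA⟩ := exists_infDist_affineSpan_pair_eq A B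
    exact ⟨z, r, hr, hAB, hBA, hAA, hAA⟩
  · obtain ⟨z, r, hr, hBB, hBA, hAB⟩ := exists_infDist_affineSpan_pair_eq B A
    exact ⟨z, r, hr, hAB, hBB, hBB, hBA⟩
  have hA : o.areaForm (C - B) (A - B) ≠ 0 := fun h ↦
    not_collinear_of_notMem_convexHull_sdiff hconv (by simp) (by simp) (by simp) hBC
      (Ne.symm hAC) (Ne.symm hAB) (collinear_of_areaForm_sub_eq_zero o h)
  have hD : o.areaForm (C - B) (D - B) ≠ 0 := fun h ↦
    not_collinear_of_notMem_convexHull_sdiff hconv (by simp) (by simp) (by simp) hBC hCD hBD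
      (collinear_of_areaForm_sub_eq_zero o h)
  exact exists_tangent_circle_of_pitot o hDA
    (areaForm_mul_areaForm_pos_of_mem_segment o hA hD hpAC hpBD) hpitot
end

section
/- Let ϑ: U → ℝ be differentiable at a point z with |ϑ_z| ≤ κ/2 for some κ < 1 (where ϑ_z = (∂_x ϑ − i ∂_y ϑ)/2 is the Wirtinger derivative, and ϑ_z̄ = conj(ϑ_z) since ϑ is real-valued). If ζ is a conformal parametrization satisfying z_ζ z̄_ζ = (ϑ_ζ)² and |z_ζ| > |ϑ_ζ| ≥ |z̄_ζ|, and ν := −ϑ_ζ / z_ζ, then |ν| ≤ 2|ϑ_z| ≤ κ < 1. -/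
theorem norm_mul_add_star_mul_le {R : Type*} [NonUnitalSeminormedRing R] [StarAddMonoid R]
    [NormedStarGroup R] (w a b : R) (hba : ‖b‖ ≤ ‖a‖) :
    ‖w * a + star w * b‖ ≤ 2 * ‖w‖ * ‖a‖ :=
  calc ‖w * a + star w * b‖ ≤ ‖w‖ * ‖a‖ + ‖star w‖ * ‖b‖ :=
        (norm_add_le _ _).trans (add_le_add (norm_mul_le _ _) (norm_mul_le _ _))
    _ ≤ ‖w‖ * ‖a‖ + ‖w‖ * ‖a‖ := by rw [norm_star]; gcongr
    _ = 2 * ‖w‖ * ‖a‖ := by ring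

theorem beltrami_coefficient_bound_general (κ : ℝ)
    (ϑz zζ zbζ ϑζ ν : ℂ)
    (hchain : ϑζ = ϑz * zζ + (starRingEnd ℂ) ϑz * zbζ)
    (h1 : ‖ϑζ‖ < ‖zζ‖)
    (h2 : ‖zbζ‖ ≤ ‖ϑζ‖)
    (hbound : ‖ϑz‖ ≤ κ / 2)
    (hν : ν = -ϑζ / zζ) :
    ‖ν‖ ≤ 2 * ‖ϑz‖ ∧ 2 * ‖ϑz‖ ≤ κ := by
  have hϑζ : ‖ϑζ‖ ≤ 2 * ‖ϑz‖ * ‖zζ‖ :=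
    hchain ▸ norm_mul_add_star_mul_le ϑz zζ zbζ (h2.trans h1.le)
  refine ⟨?_, by linarith⟩
  rw [hν, norm_div, norm_neg, div_le_iff₀ ((norm_nonneg _).trans_lt h1)]
  exact hϑζ

/-- bound on the Beltrami coefficient. With the chain rule
`ϑ_ζ = ϑ_z z_ζ + conj(ϑ_z) z̄_ζ` (for real-valued `ϑ`), the conformality relation
`z_ζ z̄_ζ = ϑ_ζ²` with `|z_ζ| > |ϑ_ζ| ≥ |z̄_ζ|`, and `|ϑ_z| ≤ κ/2` with `κ < 1`,
the coefficient `ν = -ϑ_ζ / z_ζ` satisfies `|ν| ≤ 2|ϑ_z| ≤ κ < 1`. -/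
theorem beltrami_coefficient_bound (κ : ℝ) (hκ : κ < 1)
    (ϑz zζ zbζ ϑζ ν : ℂ)
    (hchain : ϑζ = ϑz * zζ + (starRingEnd ℂ) ϑz * zbζ)
    (hconf : zζ * zbζ = ϑζ ^ 2)
    (h1 : ‖ϑζ‖ < ‖zζ‖)
    (h2 : ‖zbζ‖ ≤ ‖ϑζ‖)
    (hbound : ‖ϑz‖ ≤ κ / 2)
    (hν : ν = -ϑζ / zζ) :
    ‖ν‖ ≤ 2 * ‖ϑz‖ ∧ 2 * ‖ϑz‖ ≤ κ :=
  beltrami_coefficient_bound_general κ ϑz zζ zbζ ϑζ ν hchain h1 h2 hbound hν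
end
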